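/- arXiv:2507.19169 — 4 statements merged into one kernel-verified Lean document; each statement's English description precedes it below -/
import Mathlib

section
/- The following are equivalent: (i) for each bounded Borel function f : S → ℝ the sequence α_n(f) converges in probability; (ii) for each bounded continuous function f : S → ℝ the sequence α_n(f) converges in probability, and in addition lim_n P(X_n ∈ B) exists for every Borel set B ∈ 𝓑. -/
/-!
Both directions pass through `L¹(P)`. For bounded `f` the predictive means `α_n(f)` are uniformly
bounded, so by Vitali's convergence theorem they converge in probability iff they are Cauchy in
`L¹(P)`; moreover `‖α_n(f) - α_n(g)‖₁ ≤ ∫ |f - g| dμ_n`, where `μ_n` is the law of `X_n`.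

(i) ⇒ (ii): `P(X_n ∈ B) = E[α_n(1_B)]`, and the expectation is continuous on `L¹(P)`.

(ii) ⇒ (i): the laws `μ_n` converge setwise, so by the Vitali–Hahn–Saks theorem they are uniformly
absolutely continuous with respect to `λ = ∑ 2⁻ⁿ μ_n`; its proof applies Baire's theorem to the
closed set of indicator functions in `L¹(λ)`, on which each `F ↦ ∫ F dμ_n` is continuous.
Approximating `f` in `L¹(λ)` by a continuous `g` with the same bound then makes `∫ |f - g| dμ_n`
small uniformly in `n`, so `α_n(f)` is `L¹`-Cauchy because `α_n(g)` is.
-/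

open MeasureTheory ProbabilityTheory Filter Topology
open scoped ENNReal NNReal

variable {Ω S : Type*}

/-- `Filt X n` is the σ-field `𝓕_n = σ(X_1,…,X_n)` generated by the first `n` variables.
Indexing convention: `X i` here denotes the paper's `X_{i+1}`, so that `Filt X 0 = ⊥`. -/
def Filt [MeasurableSpace S] (X : ℕ → Ω → S) (n : ℕ) : MeasurableSpace Ω :=
  ⨆ i ∈ Finset.range n, MeasurableSpace.comap (X i) inferInstance

/-- The predictive mean `α_n(f) = E[f(X_{n+1}) ∣ 𝓕_n]` (here the paper's `X_{n+1}` is `X n`). -/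
noncomputable def predMean [MeasurableSpace Ω] [MeasurableSpace S]
    (P : Measure Ω) (X : ℕ → Ω → S) (f : S → ℝ) (n : ℕ) : Ω → ℝ :=
  P[(fun ω => f (X n ω)) | Filt X n]

theorem cauchySeq_of_forall_dist_le {X ι : Type*} [PseudoMetricSpace X] [Nonempty ι]
    [SemilatticeSup ι] {u : ι → X}
    (h : ∀ ε > 0, ∃ v : ι → X, CauchySeq v ∧ ∀ n, dist (u n) (v n) ≤ ε) : CauchySeq u := by
  refine Metric.cauchySeq_iff.2 fun ε hε => ?_
  obtain ⟨v, hv, huv⟩ := h (ε / 4) (by positivity)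
  obtain ⟨N, hN⟩ := Metric.cauchySeq_iff.1 hv (ε / 4) (by positivity)
  refine ⟨N, fun m hm n hn => ?_⟩
  have := dist_triangle4 (u m) (v m) (v n) (u n)
  linarith [huv m, huv n, hN m hm n hn, dist_comm (v n) (u n)]

theorem exists_ball_forall_dist_le_of_cauchySeq {Y E : Type*} [PseudoMetricSpace Y] [BaireSpace Y]
    [Nonempty Y] [PseudoMetricSpace E] {f : ℕ → Y → E} (hf : ∀ n, Continuous (f n))
    (hcauchy : ∀ y, CauchySeq fun n => f n y) {ε : ℝ} (hε : 0 < ε) :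
    ∃ y₀, ∃ r > 0, ∃ N, ∀ y ∈ Metric.ball y₀ r, ∀ n ≥ N, ∀ m ≥ N, dist (f n y) (f m y) ≤ ε := by
  set C : ℕ → Set Y := fun N => ⋂ n ≥ N, ⋂ m ≥ N, {y | dist (f n y) (f m y) ≤ ε}
  have hC : ∀ N, IsClosed (C N) := fun N =>
    isClosed_biInter fun n _ => isClosed_biInter fun m _ =>
      isClosed_le ((hf n).dist (hf m)) continuous_const
  have hcover : ⋃ N, C N = Set.univ := Set.eq_univ_of_forall fun y => by
    obtain ⟨N, hN⟩ := Metric.cauchySeq_iff.1 (hcauchy y) ε hε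
    simp only [C, Set.mem_iUnion, Set.mem_iInter]
    exact ⟨N, fun n hn m hm => (hN n hn m hm).le⟩
  obtain ⟨N, y₀, hy₀⟩ := nonempty_interior_of_iUnion_of_closed hC hcover
  obtain ⟨r, hr, hball⟩ := Metric.isOpen_iff.1 isOpen_interior y₀ hy₀
  refine ⟨y₀, r, hr, N, fun y hy n hn m hm => ?_⟩
  have hy := interior_subset (hball hy)
  simp only [C, Set.mem_iInter] at hy
  exact hy n hn m hm

section ConvergenceInMeasure

variable {α E : Type*} {m : MeasurableSpace α} {μ : Measure α} [NormedAddCommGroup E]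

theorem exists_tendstoInMeasure_of_cauchySeq_toL1 [CompleteSpace E] {F : ℕ → α → E}
    (hF : ∀ n, Integrable (F n) μ) (h : CauchySeq fun n => (hF n).toL1 (F n)) :
    ∃ l, TendstoInMeasure μ F atTop l := by
  obtain ⟨L, hL⟩ := cauchySeq_tendsto_of_complete h
  exact ⟨L, (tendstoInMeasure_of_tendsto_Lp hL).congr_left fun n => (hF n).coeFn_toL1⟩

theorem uniformIntegrable_of_ae_norm_le [IsFiniteMeasure μ] {ι : Type*} {F : ι → α → E}
    {p : ℝ≥0∞} (hp : 1 ≤ p) (hp' : p ≠ ∞) (hF : ∀ i, AEStronglyMeasurable (F i) μ) {C : ℝ}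
    (hC : ∀ i, ∀ᵐ x ∂μ, ‖F i x‖ ≤ C) : UniformIntegrable F p μ := by
  refine uniformIntegrable_of hp hp' hF fun ε hε => ⟨C.toNNReal + 1, fun i => ?_⟩
  have hzero : {x | C.toNNReal + 1 ≤ ‖F i x‖₊}.indicator (F i) =ᵐ[μ] 0 := by
    filter_upwards [hC i] with x hx
    refine Set.indicator_of_notMem (fun hx' => ?_) _
    have : (C.toNNReal : ℝ) + 1 ≤ ‖F i x‖ := by exact_mod_cast hx'
    linarith [Real.le_coe_toNNReal C]
  rw [eLpNorm_congr_ae hzero, eLpNorm_zero]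
  exact bot_le

theorem cauchySeq_toL1_of_tendstoInMeasure [IsFiniteMeasure μ] {F : ℕ → α → E}
    (hF : ∀ n, Integrable (F n) μ) {C : ℝ} (hC : ∀ n, ∀ᵐ x ∂μ, ‖F n x‖ ≤ C) {l : α → E}
    (hl : TendstoInMeasure μ F atTop l) : CauchySeq fun n => (hF n).toL1 (F n) := by
  have hUI := uniformIntegrable_of_ae_norm_le le_rfl ENNReal.one_ne_top
    (fun n => (hF n).aestronglyMeasurable) hC
  have hlint : Integrable l μ := hUI.integrable_of_tendstoInMeasure hl
  refine Tendsto.cauchySeq (x := hlint.toL1 l) ?_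
  rw [Lp.tendsto_Lp_iff_tendsto_eLpNorm']
  refine (tendsto_Lp_finite_of_tendstoInMeasure le_rfl ENNReal.one_ne_top
    (fun n => (hF n).aestronglyMeasurable) (memLp_one_iff_integrable.2 hlint) hUI.2.1 hl).congr
    fun n => eLpNorm_congr_ae ((hF n).coeFn_toL1.sub hlint.coeFn_toL1).symm

theorem exists_tendstoInMeasure_iff_cauchySeq_toL1 [IsFiniteMeasure μ] [CompleteSpace E]
    {F : ℕ → α → E} (hF : ∀ n, Integrable (F n) μ) {C : ℝ} (hC : ∀ n, ∀ᵐ x ∂μ, ‖F n x‖ ≤ C) :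
    (∃ l, TendstoInMeasure μ F atTop l) ↔ CauchySeq fun n => (hF n).toL1 (F n) :=
  ⟨fun ⟨_, hl⟩ => cauchySeq_toL1_of_tendstoInMeasure hF hC hl,
    exists_tendstoInMeasure_of_cauchySeq_toL1 hF⟩

theorem exists_tendsto_integral_of_cauchySeq {F : ℕ → α →₁[μ] ℝ} (h : CauchySeq F) :
    ∃ L, Tendsto (fun n => ∫ x, F n x ∂μ) atTop (𝓝 L) := by
  have := (L1.integralCLM (α := α) (E := ℝ) (μ := μ)).uniformContinuous.comp_cauchySeq h
  obtain ⟨L, hL⟩ := cauchySeq_tendsto_of_complete this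
  exact ⟨L, hL.congr fun n => ((L1.integral_eq _).symm.trans (L1.integral_eq_integral _))⟩

end ConvergenceInMeasure

section MeasureAlgebra

variable {α : Type*} {m : MeasurableSpace α}

theorem MeasureTheory.Lp.isClosed_setOf_ae_mem {E : Type*} [NormedAddCommGroup E] {p : ℝ≥0∞} [Fact (1 ≤ p)]
    {μ : Measure α} {T : Set E} (hT : IsClosed T) : IsClosed {F : Lp E p μ | ∀ᵐ x ∂μ, F x ∈ T} :=
  IsSeqClosed.isClosed fun F G hF hFG => by
    obtain ⟨φ, -, hφ⟩ := (tendstoInMeasure_of_tendsto_Lp hFG).exists_seq_tendsto_ae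
    filter_upwards [ae_all_iff.2 fun n => hF (φ n), hφ] with x hx hφx
    exact hT.mem_of_tendsto hφx (Eventually.of_forall hx)

theorem MeasureTheory.Lp.exists_indicatorConstLp_eq_of_ae_mem {ν : Measure α} [IsFiniteMeasure ν]
    {F : Lp ℝ 1 ν} (hF : ∀ᵐ x ∂ν, F x ∈ ({0, 1} : Set ℝ)) :
    ∃ s, ∃ hs : MeasurableSet s, indicatorConstLp 1 hs (measure_ne_top ν s) (1 : ℝ) = F := by
  have hs : MeasurableSet {x | F x = 1} :=
    (Lp.stronglyMeasurable F).measurable (measurableSet_singleton 1)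
  refine ⟨_, hs, Lp.ext (indicatorConstLp_coeFn.trans ?_)⟩
  filter_upwards [hF] with x hx
  obtain hx | hx : F x = 0 ∨ F x = 1 := hx <;> simp [hx]

theorem integral_LpToLpOfMeasureLeSMul_indicatorConstLp {μ ν : Measure α} [IsFiniteMeasure ν]
    {c : ℝ≥0∞} (hc : c ≠ ∞) (h : μ ≤ c • ν) {s : Set α} (hs : MeasurableSet s) :
    ∫ x, Lp.LpToLpOfMeasureLeSMul hc h (indicatorConstLp 1 hs (measure_ne_top ν s) (1 : ℝ)) x ∂μ
      = μ.real s := by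
  rw [integral_congr_ae ((Lp.coeFn_LpToLpOfMeasureLeSMul hc h _).trans
    ((Measure.absolutelyContinuous_of_le_smul h).ae_eq indicatorConstLp_coeFn)),
    integral_indicator_const _ hs, smul_eq_mul, mul_one]

theorem measureReal_le_of_le_smul {μ ν : Measure α} [IsFiniteMeasure ν] {c : ℝ≥0∞} (hc : c ≠ ∞)
    (h : μ ≤ c • ν) (s : Set α) : μ.real s ≤ c.toReal * ν.real s := by
  rw [measureReal_def, measureReal_def, ← ENNReal.toReal_mul]
  exact ENNReal.toReal_mono (ENNReal.mul_ne_top hc (measure_ne_top ν s)) (h s)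

theorem exists_forall_abs_measureReal_sub_le_of_tendsto {μ : ℕ → Measure α} {ν : Measure α}
    [IsFiniteMeasure ν] {c : ℕ → ℝ≥0∞} (hc : ∀ n, c n ≠ ∞) (hle : ∀ n, μ n ≤ c n • ν)
    (hconv : ∀ s, MeasurableSet s → ∃ L, Tendsto (fun n => (μ n).real s) atTop (𝓝 L))
    {ε : ℝ} (hε : 0 < ε) :
    ∃ s₀, MeasurableSet s₀ ∧ ∃ r > 0, ∃ N, ∀ s, MeasurableSet s → ν.real (symmDiff s s₀) < r →
      ∀ n ≥ N, |(μ n).real s - (μ N).real s| ≤ ε := by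
  set K := {F : Lp ℝ 1 ν | ∀ᵐ x ∂ν, F x ∈ ({0, 1} : Set ℝ)}
  have hK : IsClosed K := Lp.isClosed_setOf_ae_mem (Set.toFinite _).isClosed
  have : CompleteSpace K := hK.completeSpace_coe
  have hind : ∀ s (hs : MeasurableSet s), indicatorConstLp 1 hs (measure_ne_top ν s) (1 : ℝ) ∈ K :=
    fun s hs => by
      filter_upwards [indicatorConstLp_coeFn (p := 1) (hs := hs) (hμs := measure_ne_top ν s)
        (c := (1 : ℝ))] with x hx
      rw [hx]
      by_cases h : x ∈ s <;> simp [h]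
  have : Nonempty K := ⟨⟨_, hind ∅ MeasurableSet.empty⟩⟩
  set φ : ℕ → K → ℝ := fun n F => ∫ x, Lp.LpToLpOfMeasureLeSMul (hc n) (hle n) F.1 x ∂μ n
  have hφ : ∀ n s (hs : MeasurableSet s), φ n ⟨_, hind s hs⟩ = (μ n).real s := fun n s hs =>
    integral_LpToLpOfMeasureLeSMul_indicatorConstLp (hc n) (hle n) hs
  have hφc : ∀ n, Continuous (φ n) := fun n =>
    continuous_integral.comp ((ContinuousLinearMap.continuous _).comp continuous_subtype_val)
  have hcauchy : ∀ F, CauchySeq fun n => φ n F := by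
    rintro ⟨F, hF⟩
    obtain ⟨s, hs, rfl⟩ := Lp.exists_indicatorConstLp_eq_of_ae_mem hF
    obtain ⟨L, hL⟩ := hconv s hs
    simpa only [hφ] using hL.cauchySeq
  obtain ⟨⟨F₀, hF₀⟩, r, hr, N, hball⟩ := exists_ball_forall_dist_le_of_cauchySeq hφc hcauchy hε
  obtain ⟨s₀, hs₀, rfl⟩ := Lp.exists_indicatorConstLp_eq_of_ae_mem hF₀
  refine ⟨s₀, hs₀, r, hr, N, fun s hs hsr n hn => ?_⟩
  have hmem : (⟨_, hind s hs⟩ : K) ∈ Metric.ball ⟨_, hF₀⟩ r := by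
    rw [Metric.mem_ball, Subtype.dist_eq, dist_indicatorConstLp_eq_norm,
      norm_indicatorConstLp one_ne_zero ENNReal.one_ne_top]
    simpa using hsr
  simpa only [hφ, Real.dist_eq] using hball _ hmem n hn N le_rfl

theorem measureReal_le_add_of_abs_sub_le {μ μ' : Measure α} [IsFiniteMeasure μ]
    [IsFiniteMeasure μ'] {s t : Set α} (hs : MeasurableSet s) {η : ℝ}
    (hunion : |μ.real (t ∪ s) - μ'.real (t ∪ s)| ≤ η)
    (hdiff : |μ.real (t \ s) - μ'.real (t \ s)| ≤ η) : μ.real s ≤ μ'.real s + 2 * η := by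
  rw [← Set.sdiff_union_self, measureReal_union Set.disjoint_sdiff_left hs,
    measureReal_union Set.disjoint_sdiff_left hs] at hunion
  linarith [(abs_le.1 hunion).2, (abs_le.1 hdiff).1]

def UniformlyAbsolutelyContinuous {ι : Type*} (μ : ι → Measure α) (ν : Measure α) : Prop :=
  ∀ ⦃ε : ℝ⦄, 0 < ε → ∃ δ > 0, ∀ s, MeasurableSet s → ν s ≤ ENNReal.ofReal δ →
    ∀ i, μ i s ≤ ENNReal.ofReal ε

/-- **Vitali–Hahn–Saks theorem.** -/
theorem uniformlyAbsolutelyContinuous_of_tendsto {μ : ℕ → Measure α} [∀ n, IsFiniteMeasure (μ n)]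
    {ν : Measure α} [IsFiniteMeasure ν] {c : ℕ → ℝ≥0∞} (hc : ∀ n, c n ≠ ∞)
    (hle : ∀ n, μ n ≤ c n • ν)
    (hconv : ∀ s, MeasurableSet s → ∃ L, Tendsto (fun n => (μ n).real s) atTop (𝓝 L)) :
    UniformlyAbsolutelyContinuous μ ν := by
  intro ε hε
  obtain ⟨s₀, hs₀, r, hr, N, hN⟩ :=
    exists_forall_abs_measureReal_sub_le_of_tendsto hc hle hconv (by positivity : 0 < ε / 3)
  set D := ∑ k ∈ Finset.range (N + 1), (c k).toReal
  have hD : 0 ≤ D := Finset.sum_nonneg fun k _ => ENNReal.toReal_nonneg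
  refine ⟨min (r / 2) (ε / 3 / (D + 1)), by positivity, fun s hs hνs n => ?_⟩
  have hνs : ν.real s ≤ min (r / 2) (ε / 3 / (D + 1)) :=
    ENNReal.toReal_le_of_le_ofReal (by positivity) hνs
  have hsmall : ∀ k ≤ N, (μ k).real s ≤ ε / 3 := fun k hk => calc
    (μ k).real s ≤ (c k).toReal * ν.real s := measureReal_le_of_le_smul (hc k) (hle k) s
    _ ≤ D * (ε / 3 / (D + 1)) := by
        gcongr
        · exact Finset.single_le_sum (fun j _ => ENNReal.toReal_nonneg)
            (Finset.mem_range.2 (Nat.lt_succ_of_le hk))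
        · exact hνs.trans (min_le_right _ _)
    _ ≤ ε / 3 := by
        rw [mul_div_assoc']
        exact div_le_of_le_mul₀ (by positivity) (by positivity) (by nlinarith)
  rw [ENNReal.le_ofReal_iff_toReal_le (measure_ne_top (μ n) s) hε.le, ← measureReal_def]
  rcases le_or_gt n N with hn | hn
  · exact (hsmall n hn).trans (by linarith)
  -- `s` is the difference of two sets that are `ν`-close to `s₀`
  have hclose : ∀ t, MeasurableSet t → symmDiff t s₀ ⊆ s →
      |(μ n).real t - (μ N).real t| ≤ ε / 3 := fun t ht hts =>
    hN t ht ((measureReal_mono hts).trans_lt (by linarith [hνs.trans (min_le_left _ _)])) n hn.le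
  have := measureReal_le_add_of_abs_sub_le hs
    (hclose (s₀ ∪ s) (hs₀.union hs) fun x hx => by simp [symmDiff] at hx; tauto)
    (hclose (s₀ \ s) (hs₀.diff hs) fun x hx => by simp [symmDiff] at hx; tauto)
  linarith [hsmall N le_rfl]

theorem exists_isFiniteMeasure_le_two_pow_smul (μ : ℕ → Measure α)
    [∀ n, IsProbabilityMeasure (μ n)] :
    ∃ ν : Measure α, IsFiniteMeasure ν ∧ ∀ n, μ n ≤ (2 : ℝ≥0∞) ^ n • ν := by
  refine ⟨Measure.sum fun n => (2⁻¹ : ℝ≥0∞) ^ n • μ n, ⟨?_⟩, fun n => ?_⟩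
  · simp [Measure.sum_apply _ MeasurableSet.univ]
  · calc μ n = (2 : ℝ≥0∞) ^ n • (2⁻¹ : ℝ≥0∞) ^ n • μ n := by
          rw [smul_smul, ← mul_pow, ENNReal.mul_inv_cancel two_ne_zero ENNReal.ofNat_ne_top,
            one_pow, one_smul]
      _ ≤ (2 : ℝ≥0∞) ^ n • Measure.sum fun n => (2⁻¹ : ℝ≥0∞) ^ n • μ n := by
          gcongr; exact Measure.le_sum _ n

end MeasureAlgebra

section Approximation

variable {α : Type*} {m : MeasurableSpace α}

theorem integral_le_add_mul_measureReal_setOf_le {μ : Measure α} [IsProbabilityMeasure μ]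
    {h : α → ℝ} (hh : Measurable h) {M : ℝ} (hM : ∀ x, |h x| ≤ M) {t : ℝ} (ht : 0 ≤ t) :
    ∫ x, h x ∂μ ≤ t + M * μ.real {x | t ≤ h x} := by
  have hs : MeasurableSet {x | t ≤ h x} := measurableSet_le measurable_const hh
  calc ∫ x, h x ∂μ ≤ ∫ x, (t + {x | t ≤ h x}.indicator (fun _ => M) x) ∂μ := by
        refine integral_mono (Integrable.of_bound hh.aestronglyMeasurable M (ae_of_all _ hM))
          ((integrable_const t).add ((integrable_const M).indicator hs)) fun x => ?_
        by_cases hx : t ≤ h x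
        · simp only [Set.indicator_of_mem (show x ∈ {x | t ≤ h x} from hx)]
          linarith [(abs_le.1 (hM x)).2]
        · simp only [Set.indicator_of_notMem (show x ∉ {x | t ≤ h x} from hx)]
          linarith
    _ = t + M * μ.real {x | t ≤ h x} := by
        rw [integral_add (integrable_const t) ((integrable_const M).indicator hs),
          integral_const, integral_indicator_const _ hs, probReal_univ, smul_eq_mul,
          smul_eq_mul, one_mul, mul_comm]

theorem UniformlyAbsolutelyContinuous.exists_continuous_forall_integral_abs_sub_le
    [TopologicalSpace α] [NormalSpace α] [BorelSpace α] {ι : Type*} {μ : ι → Measure α}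
    [∀ i, IsProbabilityMeasure (μ i)] {ν : Measure α} [IsFiniteMeasure ν] [ν.WeaklyRegular]
    (hμν : UniformlyAbsolutelyContinuous μ ν) {f : α → ℝ} (hf : Measurable f) {C : ℝ≥0}
    (hC : ∀ x, |f x| ≤ C) {ε : ℝ} (hε : 0 < ε) :
    ∃ g : α → ℝ, Continuous g ∧ (∀ x, |g x| ≤ C) ∧ ∀ i, ∫ x, |f x - g x| ∂μ i ≤ ε := by
  obtain ⟨δ, hδ, hδν⟩ := hμν (by positivity : 0 < ε / (2 * (2 * C + 1)))
  have hfν : Integrable f ν := Integrable.of_bound hf.aestronglyMeasurable C (ae_of_all _ hC)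
  obtain ⟨g₀, hfg₀, hg₀⟩ :=
    hfν.exists_boundedContinuous_integral_sub_le (by positivity : 0 < ε / 2 * δ)
  have hCC : -(C : ℝ) ≤ C := neg_le_self C.2
  -- truncating `g₀` at the bound of `f` only brings it closer to `f`
  set g : α → ℝ := fun x => Set.projIcc (-(C : ℝ)) C hCC (g₀ x)
  have hg : Continuous g := continuous_subtype_val.comp (continuous_projIcc.comp g₀.continuous)
  have hgC : ∀ x, |g x| ≤ C := fun x => abs_le.2 (Set.projIcc (-(C : ℝ)) C hCC (g₀ x)).2
  have hfg : ∀ x, |f x - g x| ≤ |f x - g₀ x| := fun x => by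
    simpa [g, Set.projIcc_of_mem hCC (abs_le.1 (hC x))] using
      Set.abs_projIcc_sub_projIcc hCC (c := f x) (d := g₀ x)
  have hgν : Integrable g ν := Integrable.of_bound hg.aestronglyMeasurable C (ae_of_all _ hgC)
  have hfgm : Measurable fun x => |f x - g x| := (hf.sub hg.measurable).abs
  set s := {x | ε / 2 ≤ |f x - g x|}
  have hs : MeasurableSet s := measurableSet_le measurable_const hfgm
  have hνs : ν s ≤ ENNReal.ofReal δ := by
    rw [ENNReal.le_ofReal_iff_toReal_le (measure_ne_top ν s) hδ.le, ← measureReal_def]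
    refine le_of_mul_le_mul_left ?_ (by positivity : 0 < ε / 2)
    calc ε / 2 * ν.real s ≤ ∫ x, |f x - g x| ∂ν :=
          mul_meas_ge_le_integral_of_nonneg (ae_of_all _ fun x => abs_nonneg _)
            (hfν.sub hgν).abs _
      _ ≤ ∫ x, ‖f x - g₀ x‖ ∂ν := integral_mono (hfν.sub hgν).abs (hfν.sub hg₀).norm hfg
      _ ≤ ε / 2 * δ := hfg₀
  refine ⟨g, hg, hgC, fun i => ?_⟩
  calc ∫ x, |f x - g x| ∂μ i ≤ ε / 2 + 2 * C * (μ i).real s :=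
        integral_le_add_mul_measureReal_setOf_le hfgm (fun x => by
          rw [abs_abs]; linarith [abs_sub (f x) (g x), hC x, hgC x]) (by positivity)
    _ ≤ ε / 2 + 2 * C * (ε / (2 * (2 * C + 1))) := by
        gcongr
        exact ENNReal.toReal_le_of_le_ofReal (by positivity) (hδν s hs hνs i)
    _ ≤ ε := by
        have : 2 * C * (ε / (2 * (2 * C + 1))) ≤ ε / 2 := by
          rw [mul_div_assoc', div_le_div_iff₀ (by positivity) two_pos]
          nlinarith
        linarith

end Approximation

section PredictiveMean

variable [MeasurableSpace Ω] [MeasurableSpace S] {P : Measure Ω} {X : ℕ → Ω → S}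

theorem filt_le (hX : ∀ i, Measurable (X i)) (n : ℕ) : Filt X n ≤ ‹MeasurableSpace Ω› :=
  iSup₂_le fun i _ => (hX i).comap_le

theorem integrable_predMean (f : S → ℝ) (n : ℕ) : Integrable (predMean P X f n) P :=
  integrable_condExp

variable (P X) in
noncomputable def predMeanL1 (f : S → ℝ) (n : ℕ) : Ω →₁[P] ℝ :=
  (integrable_predMean (X := X) f n).toL1 (predMean P X f n)

theorem coeFn_predMeanL1 (f : S → ℝ) (n : ℕ) : predMeanL1 P X f n =ᵐ[P] predMean P X f n :=
  Integrable.coeFn_toL1 _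

theorem exists_tendstoInMeasure_predMean_iff_cauchySeq [IsFiniteMeasure P] {f : S → ℝ}
    (hf : ∃ C, ∀ x, |f x| ≤ C) :
    (∃ l, TendstoInMeasure P (fun n => predMean P X f n) atTop l) ↔
      CauchySeq (predMeanL1 P X f) := by
  obtain ⟨C, hC⟩ := hf
  exact exists_tendstoInMeasure_iff_cauchySeq_toL1 (integrable_predMean f)
    fun n => ae_bdd_abs_condExp_of_ae_bdd_abs (ae_of_all _ fun ω => hC (X n ω))

theorem integral_predMeanL1 (hX : ∀ i, Measurable (X i)) [IsFiniteMeasure P] {f : S → ℝ}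
    {n : ℕ} (hf : AEStronglyMeasurable f (P.map (X n))) :
    ∫ ω, predMeanL1 P X f n ω ∂P = ∫ x, f x ∂P.map (X n) := by
  have := isFiniteMeasure_trim (μ := P) (filt_le hX n)
  rw [integral_congr_ae (coeFn_predMeanL1 f n), predMean, integral_condExp (filt_le hX n),
    integral_map (hX n).aemeasurable hf]

theorem dist_predMeanL1_le {n : ℕ} (hXn : Measurable (X n)) {f g : S → ℝ}
    (hf : Integrable f (P.map (X n))) (hg : Integrable g (P.map (X n))) :
    dist (predMeanL1 P X f n) (predMeanL1 P X g n) ≤ ∫ x, |f x - g x| ∂P.map (X n) := by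
  have hfX := hf.comp_measurable hXn
  have hgX := hg.comp_measurable hXn
  rw [dist_eq_norm, predMeanL1, predMeanL1, ← Integrable.toL1_sub,
    L1.norm_of_fun_eq_integral_norm,
    integral_map (f := fun x => |f x - g x|) hXn.aemeasurable (hf.sub hg).1.norm]
  calc ∫ ω, ‖(predMean P X f n - predMean P X g n) ω‖ ∂P
      = ∫ ω, |P[(f ∘ X n) - (g ∘ X n) | Filt X n] ω| ∂P :=
        integral_congr_ae <| by
          filter_upwards [condExp_sub hfX hgX (Filt X n)] with ω hω
          rw [hω]; rfl
    _ ≤ ∫ ω, |((f ∘ X n) - (g ∘ X n)) ω| ∂P := integral_abs_condExp_le _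
    _ = ∫ ω, |f (X n ω) - g (X n ω)| ∂P := rfl

end PredictiveMean

/-- `α_n(f)` converges in probability for each bounded Borel `f` iff it does so
for each bounded continuous `f` and, in addition, `lim_n P(X_n ∈ B)` exists for every Borel `B`. -/
theorem stmt2 [MeasurableSpace Ω]
    [TopologicalSpace S] [PolishSpace S] [MeasurableSpace S] [BorelSpace S]
    (P : Measure Ω) [IsProbabilityMeasure P]
    (X : ℕ → Ω → S) (hX : ∀ i, Measurable (X i)) :
    (∀ f : S → ℝ, Measurable f → (∃ C, ∀ x, |f x| ≤ C) →
      ∃ l : Ω → ℝ, TendstoInMeasure P (fun n => predMean P X f n) atTop l) ↔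
    ((∀ f : S → ℝ, Continuous f → (∃ C, ∀ x, |f x| ≤ C) →
        ∃ l : Ω → ℝ, TendstoInMeasure P (fun n => predMean P X f n) atTop l) ∧
      (∀ B : Set S, MeasurableSet B →
        ∃ L : ℝ, Tendsto (fun n => (P (X n ⁻¹' B)).toReal) atTop (𝓝 L))) := by
  have hlaw : ∀ n, IsProbabilityMeasure (P.map (X n)) := fun n =>
    Measure.isProbabilityMeasure_map (hX n).aemeasurable
  have hint : ∀ {f : S → ℝ} {C : ℝ}, Measurable f → (∀ x, |f x| ≤ C) →
      ∀ n, Integrable f (P.map (X n)) := fun hf hC n =>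
    Integrable.of_bound hf.aestronglyMeasurable _ (ae_of_all _ hC)
  constructor
  · intro h
    refine ⟨fun f hf hfC => h f hf.measurable hfC, fun B hB => ?_⟩
    have hB1 : ∀ x, |B.indicator (1 : S → ℝ) x| ≤ 1 := fun x => by
      by_cases hx : x ∈ B <;> simp [hx]
    obtain ⟨L, hL⟩ := exists_tendsto_integral_of_cauchySeq
      ((exists_tendstoInMeasure_predMean_iff_cauchySeq ⟨1, hB1⟩).1
        (h _ (measurable_one.indicator hB) ⟨1, hB1⟩))
    refine ⟨L, hL.congr fun n => ?_⟩
    rw [integral_predMeanL1 hX (hint (measurable_one.indicator hB) hB1 n).1,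
      integral_indicator_one hB, map_measureReal_apply (hX n) hB, measureReal_def]
  · rintro ⟨hcont, hset⟩ f hf ⟨C, hC⟩
    obtain ⟨ν, hν, hle⟩ := exists_isFiniteMeasure_le_two_pow_smul fun n => P.map (X n)
    have huac := uniformlyAbsolutelyContinuous_of_tendsto
      (fun n => ENNReal.pow_ne_top ENNReal.ofNat_ne_top) hle fun B hB => by
        simpa only [map_measureReal_apply (hX _) hB, measureReal_def] using hset B hB
    refine (exists_tendstoInMeasure_predMean_iff_cauchySeq ⟨C, hC⟩).2
      (cauchySeq_of_forall_dist_le fun ε hε => ?_)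
    have hC' : ∀ x, |f x| ≤ C.toNNReal := fun x => (hC x).trans (Real.le_coe_toNNReal C)
    obtain ⟨g, hg, hgC, hfg⟩ :=
      huac.exists_continuous_forall_integral_abs_sub_le hf hC' hε
    exact ⟨predMeanL1 P X g, (exists_tendstoInMeasure_predMean_iff_cauchySeq ⟨_, hgC⟩).1
      (hcont g hg ⟨_, hgC⟩), fun n =>
        (dist_predMeanL1_le (hX n) (hint hf hC' n) (hint hg.measurable hgC n)).trans (hfg n)⟩
end

section
/- X is conditionally identically distributed (c.i.d.) if and only if, for each bounded Borel function f : S → ℝ, the sequence (α_n(f) : n ≥ 0) is a martingale with respect to the filtration (𝓕_n). -/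
/-!
Both sides are statements about the pairs `(V, X_k)` and `(V, X_n)`, `V = (X_0, …, X_{n-1})`,
`n ≤ k`. Two pairs `(V, Y)`, `(V, Z)` have the same law iff `E[f(Y) ∣ σ(V)] = E[f(Z) ∣ σ(V)]` for
every bounded Borel `f`: both say `∫_{V ∈ B} f(Y) = ∫_{V ∈ B} f(Z)`, and indicators of
rectangles `B × C` determine a law. On the other side, by the tower property the martingale
condition `E[α_k(f) ∣ 𝓕_n] = α_n(f)` reads `E[f(X_k) ∣ 𝓕_n] = E[f(X_n) ∣ 𝓕_n]`, and
`𝓕_n = σ(V)`.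
-/

open MeasureTheory ProbabilityTheory Filter Topology
open scoped ENNReal NNReal

variable {Ω S : Type*}

def natFilt [MeasurableSpace Ω] [MeasurableSpace S] (X : ℕ → Ω → S)
    (hX : ∀ i, Measurable (X i)) : Filtration ℕ (‹MeasurableSpace Ω›) where
  seq := Filt X
  mono' := fun _ _ hmn => biSup_mono fun _ hi => Finset.mem_range.mpr
    (lt_of_lt_of_le (Finset.mem_range.mp hi) hmn)
  le' := fun _ => iSup₂_le fun i _ => (hX i).comap_le

/-- `X` is conditionally identically distributed (c.i.d.):
`(X_1,…,X_n,X_k) ∼ (X_1,…,X_n,X_{n+1})` for all `k > n ≥ 0` (with the present indexing,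
`(X_0,…,X_{n-1},X_k) ∼ (X_0,…,X_{n-1},X_n)` for all `k ≥ n ≥ 0`). -/
def CID [MeasurableSpace Ω] [MeasurableSpace S] (P : Measure Ω) (X : ℕ → Ω → S) : Prop :=
  ∀ n k : ℕ, n ≤ k →
    P.map (fun ω => ((fun i : Fin n => X i.val ω), X k ω)) =
      P.map (fun ω => ((fun i : Fin n => X i.val ω), X n ω))

lemma condExp_ae_eq_condExp_iff {F : Type*} [NormedAddCommGroup F] [NormedSpace ℝ F]
    [CompleteSpace F] {m m₀ : MeasurableSpace Ω} {μ : Measure Ω} (hm : m ≤ m₀)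
    [SigmaFinite (μ.trim hm)] {g h : Ω → F} (hg : Integrable g μ) (hh : Integrable h μ) :
    μ[g|m] =ᵐ[μ] μ[h|m] ↔ ∀ s, MeasurableSet[m] s → ∫ ω in s, g ω ∂μ = ∫ ω in s, h ω ∂μ := by
  refine ⟨fun hgh s hs => ?_, fun hgh => ?_⟩
  · rw [← setIntegral_condExp hm hg hs, ← setIntegral_condExp hm hh hs]
    exact setIntegral_congr_ae (hm s hs) (hgh.mono fun ω hω _ => hω)
  · refine ae_eq_condExp_of_forall_setIntegral_eq hm hg
      (fun s _ _ => integrable_condExp.integrableOn) (fun s hs _ => ?_)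
      stronglyMeasurable_condExp.aestronglyMeasurable |>.symm
    rw [setIntegral_condExp hm hh hs, hgh s hs]

section LawOfPair

variable {E : Type*} [MeasurableSpace Ω] [MeasurableSpace E] [MeasurableSpace S]
  {P : Measure Ω} {V : Ω → E} {Y Z : Ω → S}

lemma setIntegral_preimage_eq_setIntegral_map_prod (hV : Measurable V) (hY : Measurable Y)
    {f : S → ℝ} (hf : Measurable f) {B : Set E} (hB : MeasurableSet B) :
    ∫ ω in V ⁻¹' B, f (Y ω) ∂P = ∫ p in Prod.fst ⁻¹' B, f p.2 ∂P.map fun ω => (V ω, Y ω) := by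
  rw [setIntegral_map (f := fun p : E × S => f p.2) (measurable_fst hB)
    (hf.comp measurable_snd).aestronglyMeasurable (hV.prodMk hY).aemeasurable]
  rfl

lemma integrable_comp_of_bounded [IsFiniteMeasure P] (hY : Measurable Y) {f : S → ℝ}
    (hf : Measurable f) (hbdd : ∃ C, ∀ x, |f x| ≤ C) : Integrable (fun ω => f (Y ω)) P := by
  obtain ⟨C, hC⟩ := hbdd
  exact .of_bound (hf.comp hY).aestronglyMeasurable C (.of_forall fun ω => hC _)

lemma map_prod_eq_iff_setIntegral_eq [IsFiniteMeasure P] (hV : Measurable V) (hY : Measurable Y)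
    (hZ : Measurable Z) :
    P.map (fun ω => (V ω, Y ω)) = P.map (fun ω => (V ω, Z ω)) ↔
      ∀ f : S → ℝ, Measurable f → (∃ C, ∀ x, |f x| ≤ C) → ∀ B, MeasurableSet B →
        ∫ ω in V ⁻¹' B, f (Y ω) ∂P = ∫ ω in V ⁻¹' B, f (Z ω) ∂P := by
  refine ⟨fun hlaw f hf _ B hB => ?_, fun h => ?_⟩
  · rw [setIntegral_preimage_eq_setIntegral_map_prod hV hY hf hB,
      setIntegral_preimage_eq_setIntegral_map_prod hV hZ hf hB, hlaw]
  refine ext_of_generate_finite _ generateFrom_prod.symm isPiSystem_prod ?_ (by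
    rw [Measure.map_apply (hV.prodMk hY) .univ, Measure.map_apply (hV.prodMk hZ) .univ]; rfl)
  rintro _ ⟨B, hB, C, hC, rfl⟩
  have hrect : ∀ W : Ω → S, Measurable W →
      P.map (fun ω => (V ω, W ω)) (B ×ˢ C) =
        ENNReal.ofReal (∫ ω in V ⁻¹' B, C.indicator 1 (W ω) ∂P) := by
    intro W hW
    rw [Measure.map_apply (hV.prodMk hW) (hB.prod hC)]
    have hind : (fun ω => C.indicator (1 : S → ℝ) (W ω)) = (W ⁻¹' C).indicator 1 := by
      ext ω; exact (Set.indicator_comp_right W).symm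
    rw [hind, integral_indicator_one (hW hC), ofReal_measureReal, Measure.restrict_apply (hW hC),
      Set.inter_comm]
    rfl
  have hbdd : ∀ x, |C.indicator (1 : S → ℝ) x| ≤ 1 := fun x => by
    by_cases hx : x ∈ C <;> simp [hx]
  rw [hrect Y hY, hrect Z hZ, h (C.indicator 1) (measurable_const.indicator hC) ⟨1, hbdd⟩ B hB]

lemma map_prod_eq_iff_condExp_ae_eq [IsFiniteMeasure P] (hV : Measurable V) (hY : Measurable Y)
    (hZ : Measurable Z) :
    P.map (fun ω => (V ω, Y ω)) = P.map (fun ω => (V ω, Z ω)) ↔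
      ∀ f : S → ℝ, Measurable f → (∃ C, ∀ x, |f x| ≤ C) →
        P[fun ω => f (Y ω) | MeasurableSpace.comap V ‹_›] =ᵐ[P]
          P[fun ω => f (Z ω) | MeasurableSpace.comap V ‹_›] := by
  rw [map_prod_eq_iff_setIntegral_eq hV hY hZ]
  refine forall₃_congr fun f hf hbdd => ?_
  rw [condExp_ae_eq_condExp_iff hV.comap_le (integrable_comp_of_bounded hY hf hbdd)
    (integrable_comp_of_bounded hZ hf hbdd)]
  exact ⟨fun h _ ⟨B, hB, hs⟩ => hs ▸ h B hB, fun h B hB => h _ ⟨B, hB, rfl⟩⟩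

end LawOfPair

lemma filt_eq_comap [MeasurableSpace S] (X : ℕ → Ω → S) (n : ℕ) :
    Filt X n = MeasurableSpace.comap (fun ω (i : Fin n) => X i ω) MeasurableSpace.pi := by
  simp only [Filt, MeasurableSpace.pi, MeasurableSpace.comap_iSup, MeasurableSpace.comap_comp]
  refine le_antisymm (iSup₂_le fun i hi => ?_) (iSup_le fun i => ?_)
  · exact le_iSup (fun j : Fin n => MeasurableSpace.comap (X j) _) ⟨i, Finset.mem_range.mp hi⟩
  · exact le_biSup (fun j => MeasurableSpace.comap (X j) _) (Finset.mem_range.mpr i.2)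

section Predictive

variable [MeasurableSpace Ω] [MeasurableSpace S] {P : Measure Ω} {X : ℕ → Ω → S}

lemma cid_iff_condExp_ae_eq [IsFiniteMeasure P] (hX : ∀ i, Measurable (X i)) :
    CID P X ↔ ∀ n k, n ≤ k → ∀ f : S → ℝ, Measurable f → (∃ C, ∀ x, |f x| ≤ C) →
      P[fun ω => f (X k ω) | Filt X n] =ᵐ[P] P[fun ω => f (X n ω) | Filt X n] := by
  refine forall₃_congr fun n k _ => ?_
  rw [filt_eq_comap]
  exact map_prod_eq_iff_condExp_ae_eq (measurable_pi_lambda _ fun i => hX i) (hX k) (hX n)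

lemma martingale_predMean_iff [IsFiniteMeasure P] (hX : ∀ i, Measurable (X i)) (f : S → ℝ) :
    Martingale (predMean P X f) (natFilt X hX) P ↔ ∀ n k, n ≤ k →
      P[fun ω => f (X k ω) | Filt X n] =ᵐ[P] P[fun ω => f (X n ω) | Filt X n] := by
  refine (and_iff_right fun n => stronglyMeasurable_condExp).trans
    (forall₃_congr fun n k hnk => ?_)
  have tower := condExp_condExp_of_le (μ := P) (f := fun ω => f (X k ω))
    ((natFilt X hX).mono hnk) ((natFilt X hX).le k)
  exact ⟨tower.symm.trans, tower.trans⟩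

end Predictive

theorem stmt9_general [MeasurableSpace Ω]
    [MeasurableSpace S]
    (P : Measure Ω) [IsProbabilityMeasure P]
    (X : ℕ → Ω → S) (hX : ∀ i, Measurable (X i)) :
    CID P X ↔
      (∀ f : S → ℝ, Measurable f → (∃ C, ∀ x, |f x| ≤ C) →
        Martingale (fun n => predMean P X f n) (natFilt X hX) P) := by
  simp_rw [cid_iff_condExp_ae_eq hX, martingale_predMean_iff]
  exact ⟨fun h f hf hbdd n k hnk => h n k hnk f hf hbdd,
    fun h n k hnk f hf hbdd => h f hf hbdd n k hnk⟩

/-- `X` is c.i.d. iff, for each bounded Borel `f`, the sequence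
`(α_n(f))_{n≥0}` is a martingale with respect to the filtration `(𝓕_n)`. -/
theorem stmt9 [MeasurableSpace Ω]
    [TopologicalSpace S] [PolishSpace S] [MeasurableSpace S] [BorelSpace S]
    (P : Measure Ω) [IsProbabilityMeasure P]
    (X : ℕ → Ω → S) (hX : ∀ i, Measurable (X i)) :
    CID P X ↔
      (∀ f : S → ℝ, Measurable f → (∃ C, ∀ x, |f x| ≤ C) →
        Martingale (fun n => predMean P X f n) (natFilt X hX) P) :=
  stmt9_general P X hX
end

section
/- Let (𝓖_n) be a filtration with 𝓖_0 = {∅,Ω} and 𝓖_n ⊂ 𝓕_n for each n, let β_n(·) = P(X_{n+1} ∈ · | 𝓖_n), and assume E[f(X_k) | 𝓖_n] = E[f(X_{n+1}) | 𝓖_n] a.s. for all k > n ≥ 0 and all bounded Borel f. If lim_n E[α_n(f)²] = lim_n E[β_n(f)²] for each bounded Borel function f : S → ℝ, then for each bounded Borel f the sequence α_n(f) converges in probability. Conversely, if moreover σ(⋃_n 𝓖_n) = σ(⋃_n 𝓕_n) and each α_n(f) converges in probability, then lim_n E[α_n(f)²] = lim_n E[β_n(f)²] for each bounded Borel f. 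-/
open MeasureTheory ProbabilityTheory Filter Topology
open scoped ENNReal NNReal

variable {Ω S : Type*}

/-! Write `β_n = E[f(X_{n+1}) ∣ 𝓖_n]`. By the tower property `β_n = E[α_n ∣ 𝓖_n]`, so
`α_n - β_n` is orthogonal to `β_n` and `E[(α_n - β_n)²] = E[α_n²] - E[β_n²]`; by the
hypothesis on `𝓖`, `(β_n)` is a bounded `(𝓖_n)`-martingale. Equal limits of the second moments
thus force `α_n - β_n → 0` in `L²`, while `β_n` converges a.s., so `α_n` converges in probability.

Conversely, the bounded `α_n` converge in `L¹` to their limit in probability, and also to its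
conditional expectation `h` given `𝓕_∞ = 𝓖_∞`. Since conditional expectations are `L¹`
contractions, `‖β_n - h‖₁ ≤ ‖α_n - h‖₁ + ‖E[h ∣ 𝓖_n] - h‖₁`, and the last term tends to `0` by
Lévy's upward theorem. Both second moments therefore converge to `E[h²]`. -/

namespace MeasureTheory

variable {E : Type*} {m₀ : MeasurableSpace Ω} {μ : Measure Ω}

theorem TendstoInMeasure.add [SeminormedAddCommGroup E] {ι : Type*} {l : Filter ι}
    {f g : ι → Ω → E} {F G : Ω → E}
    (hf : TendstoInMeasure μ f l F) (hg : TendstoInMeasure μ g l G) :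
    TendstoInMeasure μ (f + g) l (F + G) := by
  rw [tendstoInMeasure_iff_dist] at hf hg ⊢
  intro ε hε
  have hsub : ∀ i, {x | ε ≤ dist ((f + g) i x) ((F + G) x)} ⊆
      {x | ε / 2 ≤ dist (f i x) (F x)} ∪ {x | ε / 2 ≤ dist (g i x) (G x)} := by
    intro i x hx
    by_contra h
    simp only [Set.mem_union, Set.mem_ofPred_eq, not_or, not_le, Pi.add_apply] at h hx
    linarith [dist_add_add_le (f i x) (g i x) (F x) (G x)]
  refine tendsto_of_tendsto_of_tendsto_of_le_of_le tendsto_const_nhds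
    (by simpa using (hf _ (half_pos hε)).add (hg _ (half_pos hε))) (fun _ => zero_le)
    fun i => (measure_mono (hsub i)).trans (measure_union_le _ _)

theorem TendstoInMeasure.ae_norm_le [SeminormedAddCommGroup E] {f : ℕ → Ω → E} {g : Ω → E}
    {R : ℝ} (hfR : ∀ n, ∀ᵐ x ∂μ, ‖f n x‖ ≤ R) (hfg : TendstoInMeasure μ f atTop g) :
    ∀ᵐ x ∂μ, ‖g x‖ ≤ R := by
  obtain ⟨ns, -, hns⟩ := hfg.exists_seq_tendsto_ae
  filter_upwards [hns, ae_all_iff.2 fun k => hfR (ns k)] with x hx hxR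
  exact le_of_tendsto' hx.norm hxR

theorem unifIntegrable_of_ae_norm_le [NormedAddCommGroup E] {ι : Type*} {p : ℝ≥0∞}
    (hp : 1 ≤ p) (hp' : p ≠ ∞) {f : ι → Ω → E} {g : Ω → ℝ} (hg : MemLp g p μ)
    (hfg : ∀ i, ∀ᵐ x ∂μ, ‖f i x‖ ≤ g x) : UnifIntegrable f p μ := by
  intro ε hε
  obtain ⟨δ, hδ, hgδ⟩ := hg.eLpNorm_indicator_le hp hp' hε
  refine ⟨δ, hδ, fun i s hs hμs => (eLpNorm_mono_ae_real ?_).trans (hgδ s hs hμs)⟩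
  filter_upwards [hfg i] with x hx
  by_cases hxs : x ∈ s <;> simp [hxs, hx]

theorem TendstoInMeasure.tendsto_eLpNorm_sub_of_ae_norm_le [IsFiniteMeasure μ]
    [NormedAddCommGroup E] {p : ℝ≥0∞} (hp : 1 ≤ p) (hp' : p ≠ ∞) {f : ℕ → Ω → E} {g : Ω → E}
    {R : ℝ} (hfm : ∀ n, AEStronglyMeasurable (f n) μ) (hfR : ∀ n, ∀ᵐ x ∂μ, ‖f n x‖ ≤ R)
    (hfg : TendstoInMeasure μ f atTop g) :
    Tendsto (fun n => eLpNorm (f n - g) p μ) atTop (𝓝 0) :=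
  tendsto_Lp_finite_of_tendstoInMeasure hp hp' hfm
    (.of_bound (hfg.aestronglyMeasurable hfm) R (hfg.ae_norm_le hfR))
    (unifIntegrable_of_ae_norm_le hp hp' (memLp_const R) hfR) hfg

theorem tendstoInMeasure_zero_of_tendsto_integral_sq {f : ℕ → Ω → ℝ}
    (hf : ∀ n, MemLp (f n) 2 μ) (h : Tendsto (fun n => ∫ x, f n x ^ 2 ∂μ) atTop (𝓝 0)) :
    TendstoInMeasure μ f atTop 0 := by
  refine tendstoInMeasure_of_tendsto_eLpNorm two_ne_zero (fun n => (hf n).1)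
    aestronglyMeasurable_const ?_
  have hnorm : ∀ n, eLpNorm (f n - 0) 2 μ = ENNReal.ofReal ((∫ x, f n x ^ 2 ∂μ) ^ (2 : ℝ)⁻¹) := by
    intro n
    rw [sub_zero, (hf n).eLpNorm_eq_integral_rpow_norm two_ne_zero ENNReal.ofNat_ne_top]
    simp
  simp_rw [hnorm]
  rw [← ENNReal.ofReal_zero]
  refine ENNReal.tendsto_ofReal ?_
  simpa using h.rpow_const (Or.inr (by norm_num : (0 : ℝ) ≤ 2⁻¹))

theorem tendsto_integral_sq_of_tendsto_eLpNorm [IsFiniteMeasure μ] {f : ℕ → Ω → ℝ}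
    {g : Ω → ℝ} {R : ℝ} (hfm : ∀ n, AEStronglyMeasurable (f n) μ)
    (hgm : AEStronglyMeasurable g μ) (hfR : ∀ n, ∀ᵐ x ∂μ, |f n x| ≤ R)
    (hgR : ∀ᵐ x ∂μ, |g x| ≤ R) (hfg : Tendsto (fun n => eLpNorm (f n - g) 1 μ) atTop (𝓝 0)) :
    Tendsto (fun n => ∫ x, f n x ^ 2 ∂μ) atTop (𝓝 (∫ x, g x ^ 2 ∂μ)) := by
  refine tendsto_integral_of_L1' _ (hgm.pow 2) (Eventually.of_forall fun n => ?_) ?_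
  · refine .of_bound ((hfm n).pow 2) (R ^ 2) ?_
    filter_upwards [hfR n] with x hx
    simpa [sq_abs] using pow_le_pow_left₀ (abs_nonneg _) hx 2
  · have hle : ∀ n, eLpNorm ((fun x => f n x ^ 2) - fun x => g x ^ 2) 1 μ ≤
        ENNReal.ofReal (2 * R) * eLpNorm (f n - g) 1 μ := by
      intro n
      refine eLpNorm_le_mul_eLpNorm_of_ae_le_mul ?_ 1
      filter_upwards [hfR n, hgR] with x hf hg
      have hfac : f n x ^ 2 - g x ^ 2 = (f n x + g x) * (f n x - g x) := by ring
      simp only [Pi.sub_apply, Real.norm_eq_abs, hfac, abs_mul]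
      gcongr
      linarith [abs_add_le (f n x) (g x)]
    refine tendsto_of_tendsto_of_tendsto_of_le_of_le tendsto_const_nhds ?_ (fun _ => zero_le) hle
    simpa using ENNReal.Tendsto.const_mul hfg (Or.inr (ENNReal.ofReal_ne_top (r := 2 * R)))

theorem eLpNorm_one_condExp_sub_condExp_le [NormedAddCommGroup E] [NormedSpace ℝ E]
    [CompleteSpace E] {m : MeasurableSpace Ω} {f g : Ω → E}
    (hf : Integrable f μ) (hg : Integrable g μ) :
    eLpNorm (μ[f | m] - μ[g | m]) 1 μ ≤ eLpNorm (f - g) 1 μ :=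
  (eLpNorm_congr_ae (condExp_sub hf hg m).symm).trans_le (eLpNorm_condExp_le_eLpNorm _ le_rfl)

theorem integral_sq_sub_condExp [IsFiniteMeasure μ] {m : MeasurableSpace Ω} (hm : m ≤ m₀)
    {f : Ω → ℝ} (hf : MemLp f 2 μ) :
    ∫ x, (f x - μ[f | m] x) ^ 2 ∂μ = ∫ x, f x ^ 2 ∂μ - ∫ x, μ[f | m] x ^ 2 ∂μ := by
  set c := μ[f | m]
  have hc : MemLp c 2 μ := hf.condExp one_le_two
  have hcf : Integrable (c * f) μ := hc.integrable_mul hf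
  have hcross : ∫ x, c x * f x ∂μ = ∫ x, c x ^ 2 ∂μ :=
    calc ∫ x, c x * f x ∂μ = ∫ x, μ[c * f | m] x ∂μ := (integral_condExp hm).symm
    _ = ∫ x, (c * c) x ∂μ := integral_congr_ae
        (condExp_mul_of_stronglyMeasurable_left stronglyMeasurable_condExp hcf
          (hf.integrable one_le_two))
    _ = ∫ x, c x ^ 2 ∂μ := by simp only [Pi.mul_apply, sq]
  have hf2 := hf.integrable_sq
  have hcf2 : Integrable (fun x => 2 * (c x * f x)) μ := hcf.const_mul 2
  have hdiff : Integrable (fun x => f x ^ 2 - 2 * (c x * f x)) μ := hf2.sub hcf2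
  calc ∫ x, (f x - c x) ^ 2 ∂μ = ∫ x, (f x ^ 2 - 2 * (c x * f x) + c x ^ 2) ∂μ := by
        congr 1; ext x; ring
  _ = ∫ x, f x ^ 2 ∂μ - ∫ x, c x ^ 2 ∂μ := by
        rw [integral_add hdiff hc.integrable_sq, integral_sub hf2 hcf2,
          integral_const_mul, hcross]
        ring

theorem martingale_condExp_of_condExp_eq [IsFiniteMeasure μ] {ℱ : Filtration ℕ m₀}
    {f : ℕ → Ω → ℝ} (hf : ∀ i j, i ≤ j → μ[f j | ℱ i] =ᵐ[μ] μ[f i | ℱ i]) :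
    Martingale (fun n => μ[f n | ℱ n]) ℱ μ :=
  ⟨fun _ => stronglyMeasurable_condExp, fun i j hij =>
    (condExp_condExp_of_le (ℱ.mono hij) (ℱ.le j)).trans (hf i j hij)⟩

theorem exists_tendstoInMeasure_of_tendsto_integral_sq_sub [IsFiniteMeasure μ]
    {ℱ : Filtration ℕ m₀} {f g : ℕ → Ω → ℝ} {R : ℝ}
    (hfm : ∀ n, AEStronglyMeasurable (f n) μ) (hfR : ∀ n, ∀ᵐ x ∂μ, |f n x| ≤ R)
    (hfg : ∀ n, μ[f n | ℱ n] =ᵐ[μ] g n) (hg : Martingale g ℱ μ)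
    (hL : Tendsto (fun n => ∫ x, f n x ^ 2 ∂μ - ∫ x, g n x ^ 2 ∂μ) atTop (𝓝 0)) :
    ∃ l, TendstoInMeasure μ f atTop l := by
  have hfL2 : ∀ n, MemLp (f n) 2 μ := fun n => .of_bound (hfm n) R (hfR n)
  have hgR : ∀ n, ∀ᵐ x ∂μ, |g n x| ≤ R := fun n => by
    filter_upwards [ae_bdd_abs_condExp_of_ae_bdd_abs (m := ℱ n) (hfR n), hfg n] with x hx hgx
    rwa [← hgx]
  have hgm : ∀ n, AEStronglyMeasurable (g n) μ :=
    fun n => ((hg.stronglyMeasurable n).mono (ℱ.le n)).aestronglyMeasurable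
  have hsq : ∀ n, ∫ x, f n x ^ 2 ∂μ - ∫ x, g n x ^ 2 ∂μ = ∫ x, (f n x - g n x) ^ 2 ∂μ := by
    intro n
    have hcong : ∀ᵐ x ∂μ, (f n x - μ[f n | ℱ n] x) ^ 2 = (f n x - g n x) ^ 2 := by
      filter_upwards [hfg n] with x hx
      rw [hx]
    rw [← integral_congr_ae hcong, integral_sq_sub_condExp (ℱ.le n) (hfL2 n)]
    exact congrArg _ (integral_congr_ae (by filter_upwards [hfg n] with x hx; rw [hx])).symm
  have hdiff : TendstoInMeasure μ (f - g) atTop 0 :=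
    tendstoInMeasure_zero_of_tendsto_integral_sq
      (fun n => (hfL2 n).sub (.of_bound (hgm n) R (hgR n))) (hL.congr hsq)
  set B := eLpNorm (fun _ : Ω => R) 1 μ
  have hgB : ∀ n, eLpNorm (g n) 1 μ ≤ B.toNNReal := fun n => by
    rw [ENNReal.coe_toNNReal (memLp_const _).eLpNorm_ne_top]
    exact eLpNorm_mono_ae_real (hgR n)
  have hconv : TendstoInMeasure μ g atTop (ℱ.limitProcess g μ) :=
    tendstoInMeasure_of_tendsto_ae hgm (hg.submartingale.ae_tendsto_limitProcess hgB)
  exact ⟨_, by simpa using hdiff.add hconv⟩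

theorem exists_tendsto_integral_sq_condExp_of_tendstoInMeasure [IsFiniteMeasure μ]
    {ℱ : Filtration ℕ m₀} {f : ℕ → Ω → ℝ} {l : Ω → ℝ} {R : ℝ}
    (hf : ∀ n, StronglyMeasurable[⨆ n, ℱ n] (f n)) (hfR : ∀ n, ∀ᵐ x ∂μ, |f n x| ≤ R)
    (hfl : TendstoInMeasure μ f atTop l) :
    ∃ L, Tendsto (fun n => ∫ x, f n x ^ 2 ∂μ) atTop (𝓝 L) ∧
      Tendsto (fun n => ∫ x, μ[f n | ℱ n] x ^ 2 ∂μ) atTop (𝓝 L) := by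
  have hle : ⨆ n, ℱ n ≤ m₀ := iSup_le ℱ.le
  have hfm : ∀ n, AEStronglyMeasurable (f n) μ :=
    fun n => ((hf n).mono hle).aestronglyMeasurable
  have hfi : ∀ n, Integrable (f n) μ := fun n => .of_bound (hfm n) R (hfR n)
  have hlR : ∀ᵐ x ∂μ, |l x| ≤ R := hfl.ae_norm_le hfR
  have hli : Integrable l μ := .of_bound (hfl.aestronglyMeasurable hfm) R hlR
  set h := μ[l | ⨆ n, ℱ n]
  have hhi : Integrable h μ := integrable_condExp
  have hhm : AEStronglyMeasurable h μ := hhi.1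
  have hhR : ∀ᵐ x ∂μ, |h x| ≤ R := ae_bdd_abs_condExp_of_ae_bdd_abs hlR
  have hfh : Tendsto (fun n => eLpNorm (f n - h) 1 μ) atTop (𝓝 0) := by
    refine tendsto_of_tendsto_of_tendsto_of_le_of_le tendsto_const_nhds
      (hfl.tendsto_eLpNorm_sub_of_ae_norm_le le_rfl ENNReal.one_ne_top hfm hfR)
      (fun _ => zero_le) fun n => ?_
    calc eLpNorm (f n - h) 1 μ = eLpNorm (μ[f n | ⨆ n, ℱ n] - h) 1 μ := by
          rw [condExp_of_stronglyMeasurable hle (hf n) (hfi n)]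
    _ ≤ eLpNorm (f n - l) 1 μ := eLpNorm_one_condExp_sub_condExp_le (hfi n) hli
  have hcondh : Tendsto (fun n => eLpNorm (μ[f n | ℱ n] - h) 1 μ) atTop (𝓝 0) := by
    refine tendsto_of_tendsto_of_tendsto_of_le_of_le tendsto_const_nhds
      (by simpa using hfh.add (hhi.tendsto_eLpNorm_condExp stronglyMeasurable_condExp))
      (fun _ => zero_le) fun n => ?_
    calc eLpNorm (μ[f n | ℱ n] - h) 1 μ
        ≤ eLpNorm (μ[f n | ℱ n] - μ[h | ℱ n]) 1 μ + eLpNorm (μ[h | ℱ n] - h) 1 μ := by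
          rw [← sub_add_sub_cancel _ (μ[h | ℱ n])]
          exact eLpNorm_add_le (integrable_condExp.1.sub integrable_condExp.1)
            (integrable_condExp.1.sub hhm) le_rfl
    _ ≤ eLpNorm (f n - h) 1 μ + eLpNorm (μ[h | ℱ n] - h) 1 μ := by
          gcongr
          exact eLpNorm_one_condExp_sub_condExp_le (hfi n) hhi
  refine ⟨∫ x, h x ^ 2 ∂μ, tendsto_integral_sq_of_tendsto_eLpNorm hfm hhm hfR hhR hfh,
    tendsto_integral_sq_of_tendsto_eLpNorm
      (fun _ => integrable_condExp.1) hhm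
      (fun n => ae_bdd_abs_condExp_of_ae_bdd_abs (hfR n)) hhR hcondh⟩

end MeasureTheory

theorem stmt15_general [MeasurableSpace Ω]
    [MeasurableSpace S]
    (P : Measure Ω) [IsProbabilityMeasure P]
    (X : ℕ → Ω → S) (hX : ∀ i, Measurable (X i))
    (G : ℕ → MeasurableSpace Ω) (hGmono : Monotone G)
    (hGF : ∀ n, G n ≤ Filt X n)
    (hcid : ∀ f : S → ℝ, Measurable f → (∃ C, ∀ x, |f x| ≤ C) → ∀ n k : ℕ, n ≤ k →
      P[(fun ω => f (X k ω)) | G n] =ᵐ[P] P[(fun ω => f (X n ω)) | G n]) :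
    ((∀ f : S → ℝ, Measurable f → (∃ C, ∀ x, |f x| ≤ C) →
        ∃ L : ℝ, Tendsto (fun n => ∫ ω, (predMean P X f n ω) ^ 2 ∂P) atTop (𝓝 L) ∧
          Tendsto (fun n => ∫ ω, ((P[(fun ω => f (X n ω)) | G n]) ω) ^ 2 ∂P) atTop (𝓝 L)) →
      ∀ f : S → ℝ, Measurable f → (∃ C, ∀ x, |f x| ≤ C) →
        ∃ l : Ω → ℝ, TendstoInMeasure P (fun n => predMean P X f n) atTop l) ∧
    ((⨆ n, G n) = (⨆ n, Filt X n) →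
      (∀ f : S → ℝ, Measurable f → (∃ C, ∀ x, |f x| ≤ C) →
        ∃ l : Ω → ℝ, TendstoInMeasure P (fun n => predMean P X f n) atTop l) →
      ∀ f : S → ℝ, Measurable f → (∃ C, ∀ x, |f x| ≤ C) →
        ∃ L : ℝ, Tendsto (fun n => ∫ ω, (predMean P X f n ω) ^ 2 ∂P) atTop (𝓝 L) ∧
          Tendsto (fun n => ∫ ω, ((P[(fun ω => f (X n ω)) | G n]) ω) ^ 2 ∂P) atTop (𝓝 L)) := by
  have hFle : ∀ n, Filt X n ≤ ‹MeasurableSpace Ω› :=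
    fun n => iSup₂_le fun i _ => (hX i).comap_le
  let 𝒢 : Filtration ℕ ‹MeasurableSpace Ω› := ⟨G, hGmono, fun n => (hGF n).trans (hFle n)⟩
  have htower : ∀ f n, P[predMean P X f n | G n] =ᵐ[P] P[(fun ω => f (X n ω)) | G n] :=
    fun f n => condExp_condExp_of_le (hGF n) (hFle n)
  have hbdd : ∀ f : S → ℝ, (∃ C, ∀ x, |f x| ≤ C) →
      ∃ R, ∀ n, ∀ᵐ ω ∂P, |predMean P X f n ω| ≤ R := fun f ⟨C, hC⟩ =>
    ⟨C, fun n => ae_bdd_abs_condExp_of_ae_bdd_abs (ae_of_all _ fun ω => hC _)⟩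
  refine ⟨fun H f hf hfC => ?_, fun hsup H f hf hfC => ?_⟩
  · obtain ⟨L, hα, hβ⟩ := H f hf hfC
    obtain ⟨R, hR⟩ := hbdd f hfC
    exact exists_tendstoInMeasure_of_tendsto_integral_sq_sub (ℱ := 𝒢)
      (fun n => integrable_condExp.1) hR (htower f)
      (martingale_condExp_of_condExp_eq (hcid f hf hfC)) (by simpa using hα.sub hβ)
  · obtain ⟨l, hl⟩ := H f hf hfC
    obtain ⟨R, hR⟩ := hbdd f hfC
    have hmeas : ∀ n, StronglyMeasurable[⨆ n, 𝒢 n] (predMean P X f n) := fun n => by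
      change StronglyMeasurable[⨆ n, G n] _
      rw [hsup]
      exact stronglyMeasurable_condExp.mono (le_iSup (Filt X) n)
    obtain ⟨L, hα, hβ⟩ := exists_tendsto_integral_sq_condExp_of_tendstoInMeasure hmeas hR hl
    exact ⟨L, hα, hβ.congr fun n => integral_congr_ae (htower f n |>.mono fun ω h => by rw [h])⟩

/-- Theorem `g65cx3`: let `(𝓖_n)` be a filtration with `𝓖_0` trivial and
`𝓖_n ⊆ 𝓕_n`, `β_n(f) = E[f(X_{n+1}) ∣ 𝓖_n]`, and suppose `E[f(X_k) ∣ 𝓖_n] = E[f(X_{n+1}) ∣ 𝓖_n]`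
a.s. for `k > n`. If `lim_n E[α_n(f)²] = lim_n E[β_n(f)²]` for each bounded Borel `f`, then each
`α_n(f)` converges in probability; conversely, if moreover `𝓖_∞ = 𝓕_∞` and each `α_n(f)`
converges in probability, then `lim_n E[α_n(f)²] = lim_n E[β_n(f)²]` for each bounded Borel `f`. -/
theorem stmt15 [MeasurableSpace Ω]
    [TopologicalSpace S] [PolishSpace S] [MeasurableSpace S] [BorelSpace S]
    (P : Measure Ω) [IsProbabilityMeasure P]
    (X : ℕ → Ω → S) (hX : ∀ i, Measurable (X i))
    (G : ℕ → MeasurableSpace Ω) (hG0 : G 0 = ⊥) (hGmono : Monotone G)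
    (hGF : ∀ n, G n ≤ Filt X n)
    (hcid : ∀ f : S → ℝ, Measurable f → (∃ C, ∀ x, |f x| ≤ C) → ∀ n k : ℕ, n ≤ k →
      P[(fun ω => f (X k ω)) | G n] =ᵐ[P] P[(fun ω => f (X n ω)) | G n]) :
    ((∀ f : S → ℝ, Measurable f → (∃ C, ∀ x, |f x| ≤ C) →
        ∃ L : ℝ, Tendsto (fun n => ∫ ω, (predMean P X f n ω) ^ 2 ∂P) atTop (𝓝 L) ∧
          Tendsto (fun n => ∫ ω, ((P[(fun ω => f (X n ω)) | G n]) ω) ^ 2 ∂P) atTop (𝓝 L)) →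
      ∀ f : S → ℝ, Measurable f → (∃ C, ∀ x, |f x| ≤ C) →
        ∃ l : Ω → ℝ, TendstoInMeasure P (fun n => predMean P X f n) atTop l) ∧
    ((⨆ n, G n) = (⨆ n, Filt X n) →
      (∀ f : S → ℝ, Measurable f → (∃ C, ∀ x, |f x| ≤ C) →
        ∃ l : Ω → ℝ, TendstoInMeasure P (fun n => predMean P X f n) atTop l) →
      ∀ f : S → ℝ, Measurable f → (∃ C, ∀ x, |f x| ≤ C) →
        ∃ L : ℝ, Tendsto (fun n => ∫ ω, (predMean P X f n ω) ^ 2 ∂P) atTop (𝓝 L) ∧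
          Tendsto (fun n => ∫ ω, ((P[(fun ω => f (X n ω)) | G n]) ω) ^ 2 ∂P) atTop (𝓝 L)) :=
  stmt15_general P X hX G hGmono hGF hcid
end

section
/- Let m ≥ 1 and let (Y_n) be an i.i.d. sequence of real non-degenerate random variables. Define X_n = Y_n − Y_{n+m}. Then X = (X_n) is stationary and m-dependent, but X is not asymptotically exchangeable: the shifted sequences (X_{n+1}, X_{n+2}, …) do not converge in distribution to any exchangeable sequence. -/
open MeasureTheory ProbabilityTheory Filter Topology
open scoped ENNReal NNReal

variable {Ω S : Type*}

/-!
Stationarity and `m`-dependence are inherited from the i.i.d. sequence `Y`, of which `X` is a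
fixed, shift-commuting function. Since `X` is stationary, the only possible limit in distribution
of its shifts is the law of `X` itself, which would then be exchangeable. Exchanging `X_m` and
`X_{2m}` gives `X_0 + X_m ~ X_0 + X_{2m}`, that is `D ~ D + D'` for `D = Y_0 - Y_m` and an
independent copy `D'`. So the law `ν` of `D` satisfies `ν ∗ ν = ν`; its characteristic function
then only takes the values `0` and `1`, hence is `≡ 1` by continuity, and `D = 0` a.s. But `Y_0`
equal to the independent `Y_m` forces `Y_0` to be a.s. constant.
-/

section IID

variable [MeasurableSpace Ω] {P : Measure Ω} {E : Type*} [MeasurableSpace E]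

lemma ProbabilityTheory.iIndepFun.map_shift_eq {Y : ℕ → Ω → E} {μ : Measure E}
    (hY : ∀ i, Measurable (Y i)) (hindep : iIndepFun Y P) (hid : ∀ i, P.map (Y i) = μ)
    (k : ℕ) :
    P.map (fun ω i => Y (i + k) ω) = P.map (fun ω i => Y i ω) := by
  rw [(hindep.precomp (add_left_injective k)).map_fun_eq_infinitePi_map fun i => hY _,
    hindep.map_fun_eq_infinitePi_map hY]
  simp only [hid]

lemma ProbabilityTheory.iIndepFun.map_sub_eq [AddGroup E] [MeasurableSub₂ E] {ι : Type*}
    {Y : ι → Ω → E} {μ : Measure E} [IsFiniteMeasure P] (hY : ∀ i, Measurable (Y i))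
    (hindep : iIndepFun Y P) (hid : ∀ i, P.map (Y i) = μ) {i j : ι} (hij : i ≠ j) :
    P.map (Y i - Y j) = (μ.prod μ).map (fun p => p.1 - p.2) := by
  have hpair := (hindep.indepFun hij).map_prod_eq_prod_map_map (hY i).aemeasurable
    (hY j).aemeasurable
  rw [hid, hid] at hpair
  rw [← hpair, Measure.map_map (by fun_prop) (by fun_prop)]
  rfl

lemma ProbabilityTheory.iIndepFun.map_shift_sub_eq [Sub E] [MeasurableSub₂ E] {Y : ℕ → Ω → E}
    {μ : Measure E} (hY : ∀ i, Measurable (Y i)) (hindep : iIndepFun Y P)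
    (hid : ∀ i, P.map (Y i) = μ) (m k : ℕ) :
    P.map (fun ω i => Y (i + k) ω - Y (i + k + m) ω) =
      P.map (fun ω i => Y i ω - Y (i + m) ω) := by
  have hT : Measurable fun (y : ℕ → E) i => y i - y (i + m) := by fun_prop
  have := congrArg (Measure.map fun (y : ℕ → E) i => y i - y (i + m))
    (hindep.map_shift_eq hY hid k)
  rw [Measure.map_map hT (by fun_prop), Measure.map_map hT (by fun_prop)] at this
  convert this using 2 <;> funext ω i <;> simp only [Function.comp_apply, Nat.add_right_comm]

end IID

section MDependence

variable {E : Type*} [MeasurableSpace E] [Sub E] [MeasurableSub₂ E] {Y : ℕ → Ω → E}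

lemma measurable_sub_iSup_comap {s : Set ℕ} {i j : ℕ} (hi : i ∈ s) (hj : j ∈ s) :
    Measurable[⨆ k ∈ s, MeasurableSpace.comap (Y k) inferInstance] fun ω => Y i ω - Y j ω := by
  have hmeas : ∀ k ∈ s, Measurable[⨆ k ∈ s, MeasurableSpace.comap (Y k) inferInstance] (Y k) :=
    fun k hk => Measurable.of_comap_le
      (le_iSup₂ (f := fun k (_ : k ∈ s) => MeasurableSpace.comap (Y k) inferInstance) k hk)
  exact (hmeas i hi).sub (hmeas j hj)

lemma ProbabilityTheory.iIndepFun.indep_filt_sub [MeasurableSpace Ω] {P : Measure Ω}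
    (hY : ∀ i, Measurable (Y i)) (hindep : iIndepFun Y P) (m n : ℕ) :
    Indep (Filt (fun i ω => Y i ω - Y (i + m) ω) n)
      (⨆ i ∈ {i : ℕ | n + m ≤ i},
        MeasurableSpace.comap (fun ω => Y i ω - Y (i + m) ω) inferInstance) P := by
  have hdisj : Disjoint {j | j < n + m} {j | n + m ≤ j} :=
    Set.disjoint_left.mpr fun {j} (hj : j < n + m) (hj' : n + m ≤ j) => by omega
  refine indep_of_indep_of_le_left (indep_of_indep_of_le_right
    (indep_iSup_of_disjoint (fun j => (hY j).comap_le) hindep.iIndep hdisj) ?_) ?_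
  · refine iSup₂_le fun i (hi : n + m ≤ i) => (measurable_sub_iSup_comap hi ?_).comap_le
    change n + m ≤ i + m; omega
  · refine iSup₂_le fun i hi => (measurable_sub_iSup_comap (s := {j | j < n + m}) ?_ ?_).comap_le
      <;> change _ < n + m <;> simp only [Finset.mem_range] at hi <;> omega

end MDependence

section Laws

variable {E : Type*} [MeasurableSpace E]

lemma map_pair_eq_of_map_swap_eq {μ : Measure (ℕ → E)} {i j k : ℕ} (hij : i ≠ j) (hik : i ≠ k)
    (hμ : μ.map (fun y n => y (Equiv.swap j k n)) = μ) :
    μ.map (fun y => (y i, y j)) = μ.map (fun y => (y i, y k)) := by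
  conv_lhs => rw [← hμ]
  rw [Measure.map_map (by fun_prop) (by fun_prop)]
  congr 1
  funext y
  simp [Equiv.swap_apply_of_ne_of_ne hij hik]

lemma eq_of_map_eq_of_tendsto_integral [MeasurableSpace Ω] {P : Measure Ω} [TopologicalSpace E]
    [HasOuterApproxClosed E] [BorelSpace E] {Z : ℕ → Ω → E} {μ Q : Measure E}
    [IsFiniteMeasure μ] [IsFiniteMeasure Q] (hZ : ∀ n, Measurable (Z n))
    (hlaw : ∀ n, P.map (Z n) = μ)
    (hconv : ∀ g : BoundedContinuousFunction E ℝ,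
      Tendsto (fun n => ∫ ω, g (Z n ω) ∂P) atTop (𝓝 (∫ y, g y ∂Q))) :
    μ = Q := by
  refine ext_of_forall_integral_eq_of_IsFiniteMeasure fun g => tendsto_nhds_unique
    (tendsto_const_nhds.congr fun n => ?_) (hconv g)
  rw [← hlaw n, integral_map (hZ n).aemeasurable g.continuous.aestronglyMeasurable]

lemma ProbabilityTheory.IndepFun.exists_ae_eq_const_of_ae_eq [MeasurableSpace Ω]
    {P : Measure Ω} [IsProbabilityMeasure P] [MeasurableEq E] {X Y : Ω → E} (hX : Measurable X)
    (hY : Measurable Y) (hXY : X ⟂ᵢ[P] Y) (heq : X =ᵐ[P] Y) :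
    ∃ c, ∀ᵐ ω ∂P, X ω = c := by
  have hdiag : ∀ᵐ p ∂(P.map X).prod (P.map Y), p.1 = p.2 := by
    rw [← hXY.map_prod_eq_prod_map_map hX.aemeasurable hY.aemeasurable,
      ae_map_iff (hX.prodMk hY).aemeasurable measurableSet_diagonal]
    exact heq
  have := Measure.isProbabilityMeasure_map (μ := P) hX.aemeasurable
  obtain ⟨c, hc⟩ := (Measure.ae_ae_of_ae_prod hdiag).exists
  refine ⟨c, ?_⟩
  filter_upwards [heq, ae_of_ae_map hY.aemeasurable hc] with ω hXY hYc
  rw [hXY, hYc]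

lemma ProbabilityTheory.iIndepFun.map_sub_conv_self_eq_of_map_swap_eq [AddGroup E]
    [MeasurableAdd₂ E] [MeasurableSub₂ E] [MeasurableSpace Ω] {P : Measure Ω} [IsFiniteMeasure P]
    {Y : ℕ → Ω → E}
    (hY : ∀ i, Measurable (Y i)) (hindep : iIndepFun Y P)
    (hid : ∀ i, P.map (Y i) = P.map (Y 0)) {m : ℕ} (hm : m ≠ 0)
    (hswap : (P.map fun ω i => Y i ω - Y (i + m) ω).map (fun y i => y (Equiv.swap m (2 * m) i)) =
      P.map fun ω i => Y i ω - Y (i + m) ω) :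
    P.map (Y 0 - Y m) ∗ P.map (Y 0 - Y m) = P.map (Y 0 - Y m) := by
  have hdiff : ∀ {i j}, i ≠ j → P.map (Y i - Y j) = P.map (Y 0 - Y m) := fun hij =>
    (hindep.map_sub_eq hY hid hij).trans (hindep.map_sub_eq hY hid hm.symm).symm
  have hnear : P.map (fun ω => (Y 0 ω - Y m ω) + (Y m ω - Y (m + m) ω)) = P.map (Y 0 - Y m) := by
    rw [← hdiff (i := 0) (j := m + m) (by omega)]
    congr 1
    funext ω
    simp
  have hfar : P.map (fun ω => (Y 0 ω - Y m ω) + (Y (2 * m) ω - Y (2 * m + m) ω)) =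
      P.map (Y 0 - Y m) ∗ P.map (Y 0 - Y m) := by
    have hind : (Y 0 - Y m) ⟂ᵢ[P] (Y (2 * m) - Y (2 * m + m)) :=
      (hindep.indepFun_prodMk_prodMk hY 0 m (2 * m) (2 * m + m) (by omega) (by omega)
        (by omega) (by omega)).comp (φ := fun p : E × E => p.1 - p.2)
        (ψ := fun p : E × E => p.1 - p.2) (by fun_prop) (by fun_prop)
    calc _ = P.map (Y 0 - Y m) ∗ P.map (Y (2 * m) - Y (2 * m + m)) :=
          hind.map_add_eq_map_conv_map₀ (by fun_prop) (by fun_prop)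
      _ = _ := by rw [hdiff (i := 2 * m) (j := 2 * m + m) (by omega)]
  have hpair := map_pair_eq_of_map_swap_eq (i := 0) (j := m) (k := 2 * m) (by omega) (by omega)
    hswap
  rw [Measure.map_map (by fun_prop) (by fun_prop), Measure.map_map (by fun_prop) (by fun_prop)]
    at hpair
  have hsum := congrArg (Measure.map fun p : E × E => p.1 + p.2) hpair
  rw [Measure.map_map (by fun_prop) (by fun_prop), Measure.map_map (by fun_prop) (by fun_prop)]
    at hsum
  simp only [Function.comp_def, zero_add] at hsum
  rw [hnear, hfar] at hsum
  exact hsum.symm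

end Laws

section NotExchangeable

variable {E : Type*} [NormedAddCommGroup E] [InnerProductSpace ℝ E] [MeasurableSpace E]
  [BorelSpace E] [SecondCountableTopology E] [CompleteSpace E]

lemma MeasureTheory.Measure.eq_dirac_zero_of_conv_self_eq {ν : Measure E}
    [IsProbabilityMeasure ν] (h : ν ∗ ν = ν) : ν = Measure.dirac 0 := by
  have hidem : ∀ t, charFun ν t = 0 ∨ charFun ν t = 1 := fun t => by
    have : charFun ν t * (charFun ν t - 1) = 0 := by
      linear_combination (by rw [← charFun_conv, h] : charFun ν t * charFun ν t = charFun ν t)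
    simpa [sub_eq_zero] using this
  refine Measure.ext_of_charFun (funext fun t => ?_)
  calc charFun ν t = charFun ν 0 :=
        isPreconnected_univ.constant_of_mapsTo (Set.toFinite {0, 1}).isDiscrete
          continuous_charFun.continuousOn (fun t _ => hidem t) trivial trivial
    _ = charFun (Measure.dirac 0) t := by simp [charFun_zero, charFun_dirac]

lemma ProbabilityTheory.iIndepFun.map_shift_sub_swap_ne [MeasurableSpace Ω] {P : Measure Ω}
    [IsProbabilityMeasure P] {Y : ℕ → Ω → E}
    (hY : ∀ i, Measurable (Y i)) (hindep : iIndepFun Y P)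
    (hid : ∀ i, P.map (Y i) = P.map (Y 0)) (hnd : ¬ ∃ c, ∀ᵐ ω ∂P, Y 0 ω = c) {m : ℕ}
    (hm : m ≠ 0) :
    (P.map fun ω i => Y i ω - Y (i + m) ω).map (fun y i => y (Equiv.swap m (2 * m) i)) ≠
      P.map fun ω i => Y i ω - Y (i + m) ω := by
  intro hswap
  have : IsProbabilityMeasure (P.map (Y 0 - Y m)) :=
    Measure.isProbabilityMeasure_map (by fun_prop)
  have hdirac := Measure.eq_dirac_zero_of_conv_self_eq
    (hindep.map_sub_conv_self_eq_of_map_swap_eq hY hid hm hswap)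
  have hae : Y 0 =ᵐ[P] Y m := by
    have hzero : ∀ᵐ z ∂(P.map (Y 0 - Y m)), z = 0 := by
      rw [hdirac]
      exact (ae_dirac_iff (measurableSet_singleton 0)).mpr rfl
    filter_upwards [ae_of_ae_map (by fun_prop) hzero] with ω hω
    exact sub_eq_zero.mp hω
  exact hnd ((hindep.indepFun hm.symm).exists_ae_eq_const_of_ae_eq (hY 0) (hY m) hae)

end NotExchangeable

/-- Example `f56n9m2q`: if `(Y_n)` is i.i.d. real non-degenerate,
`m ≥ 1` and `X_n = Y_n − Y_{n+m}`, then `X` is stationary and `m`-dependent, but not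
asymptotically exchangeable. -/
theorem stmt18 [MeasurableSpace Ω] (P : Measure Ω) [IsProbabilityMeasure P]
    (m : ℕ) (hm : 1 ≤ m)
    (Y : ℕ → Ω → ℝ) (hY : ∀ i, Measurable (Y i))
    (hindep : iIndepFun Y P)
    (hid : ∀ i, P.map (Y i) = P.map (Y 0))
    (hnd : ¬ ∃ c : ℝ, ∀ᵐ ω ∂P, Y 0 ω = c)
    (X : ℕ → Ω → ℝ) (hXdef : ∀ n ω, X n ω = Y n ω - Y (n + m) ω) :
    P.map (fun ω (i : ℕ) => X (i + 1) ω) = P.map (fun ω (i : ℕ) => X i ω) ∧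
    (∀ n, Indep (Filt X n)
      (⨆ i ∈ {i : ℕ | n + m ≤ i}, MeasurableSpace.comap (X i) inferInstance) P) ∧
    ¬ ∃ Q : Measure (ℕ → ℝ), IsProbabilityMeasure Q ∧
      (∀ σ : Equiv.Perm ℕ, {i : ℕ | σ i ≠ i}.Finite → Q.map (fun y i => y (σ i)) = Q) ∧
      (∀ g : BoundedContinuousFunction (ℕ → ℝ) ℝ,
        Tendsto (fun n => ∫ ω, g (fun i => X (n + i) ω) ∂P) atTop (𝓝 (∫ y, g y ∂Q))) := by
  obtain rfl : X = fun n ω => Y n ω - Y (n + m) ω := funext fun n => funext (hXdef n)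
  have hshift := hindep.map_shift_sub_eq hY hid m
  refine ⟨hshift 1, hindep.indep_filt_sub hY m, ?_⟩
  rintro ⟨Q, hQ, hexch, hconv⟩
  have : IsProbabilityMeasure (P.map fun ω i => Y i ω - Y (i + m) ω) :=
    Measure.isProbabilityMeasure_map (by fun_prop)
  have hlaw : P.map (fun ω i => Y i ω - Y (i + m) ω) = Q :=
    eq_of_map_eq_of_tendsto_integral (Z := fun n ω i => Y (n + i) ω - Y (n + i + m) ω)
      (fun n => by fun_prop) (fun n => by simpa only [add_comm] using hshift n) hconv
  refine hindep.map_shift_sub_swap_ne hY hid hnd (by omega : m ≠ 0) ?_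
  rw [hlaw]
  exact hexch _ ((Set.toFinite {m, 2 * m}).subset fun i hi =>
    Equiv.eq_or_eq_of_swap_apply_ne_self hi)
end
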